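/- Let R be a commutative ring with a derivation δ, let g be an invertible n×n matrix and h an invertible m×m matrix over R, and let g⊗h denote their Kronecker product (an invertible nm×nm matrix). For an invertible matrix a, write P(a) = [[a, δa],[0, a]] (block matrix, δ entrywise). Let Q be the 4nm×4nm block matrix (blocks of size nm×nm, rows and columns indexed by the pairs (1,1),(1,∂),(∂,1),(∂,∂) in this order) given by Q = [[g⊗h, g⊗δh, δg⊗h, δg⊗δh],[0, g⊗h, 0, δg⊗h],[0, 0, g⊗h, g⊗δh],[0, 0, 0, g⊗h]] (i.e., Q is the Kronecker product P(g)⊗P(h) under the lexicographic identification of indices), and let T be the 4nm×2nm block matrix [[I,0],[0,I],[0,I],[0,0]] with I the nm×nm identity. Then Q·T = T·P(g⊗h). -/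

import Mathlib

open Kronecker

/-- The first prolongation `P(a) = [[a, δa],[0, a]]` of a square matrix. -/
def prolong {R : Type*} [CommRing R] {ι : Type*} (δ : R → R) (a : Matrix ι ι R) :
    Matrix (ι ⊕ ι) (ι ⊕ ι) R :=
  Matrix.fromBlocks a (a.map δ) 0 a

/-- The matrix `T = [[I,0],[0,I],[0,I],[0,0]]` of the product-rule morphism
`(V ⊗ W)⁽¹⁾ → V⁽¹⁾ ⊗ W⁽¹⁾`, `1⊗(v⊗w) ↦ (1⊗v)⊗(1⊗w)`,
`∂⊗(v⊗w) ↦ (∂⊗v)⊗(1⊗w) + (1⊗v)⊗(∂⊗w)`. -/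
def prodRuleT {R : Type*} [CommRing R] {n m : ℕ} :
    Matrix ((Fin n ⊕ Fin n) × (Fin m ⊕ Fin m)) ((Fin n × Fin m) ⊕ (Fin n × Fin m)) R :=
  fun p q =>
    match p, q with
    | (Sum.inl i, Sum.inl j), Sum.inl (i', j') => if i = i' ∧ j = j' then 1 else 0
    | (Sum.inl i, Sum.inr j), Sum.inr (i', j') => if i = i' ∧ j = j' then 1 else 0
    | (Sum.inr i, Sum.inl j), Sum.inr (i', j') => if i = i' ∧ j = j' then 1 else 0
    | _, _ => 0

/-! Multiplying by `T` on the left selects rows and on the right adds pairs of columns, so both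
sides reduce to blocks of `g ⊗ₖ h`, `δg ⊗ₖ h` and `g ⊗ₖ δh`; the only block that is not a mere
relabelling is `δ(g ⊗ₖ h) = δg ⊗ₖ h + g ⊗ₖ δh`, the Leibniz rule applied entrywise. -/

open Matrix

theorem map_kronecker_of_leibniz {R l m p q : Type*} [Mul R] [Add R] (δ : R → R)
    (hδ : ∀ a b : R, δ (a * b) = δ a * b + a * δ b) (g : Matrix l m R) (h : Matrix p q R) :
    (g ⊗ₖ h).map δ = g.map δ ⊗ₖ h + g ⊗ₖ h.map δ := by
  ext
  simp [hδ]

section prodRuleT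

variable {R : Type*} [CommRing R] {n m : ℕ}

-- With `n`, `m` left implicit, `M * prodRuleT` elaborates through the default `HMul` instance of
-- `CStarMatrix` (definitionally, but not syntactically, the matrix product).
local notation "T" => prodRuleT (R := R) (n := n) (m := m)

section mul_prodRuleT

variable {ρ : Type*} (M : Matrix ρ ((Fin n ⊕ Fin n) × (Fin m ⊕ Fin m)) R) (r : ρ)
  (i : Fin n) (j : Fin m)

@[simp]
theorem mul_prodRuleT_apply_inl : (M * T) r (.inl (i, j)) = M r (.inl i, .inl j) := by
  simp [mul_apply, Fintype.sum_prod_type, prodRuleT, ite_and]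

@[simp]
theorem mul_prodRuleT_apply_inr :
    (M * T) r (.inr (i, j)) = M r (.inl i, .inr j) + M r (.inr i, .inl j) := by
  simp [mul_apply, Fintype.sum_prod_type, prodRuleT, ite_and]

end mul_prodRuleT

section prodRuleT_mul

variable {κ : Type*} (M : Matrix ((Fin n × Fin m) ⊕ (Fin n × Fin m)) κ R) (i : Fin n) (j : Fin m)
  (k : κ)

@[simp]
theorem prodRuleT_mul_apply_inl_inl : (T * M) (.inl i, .inl j) k = M (.inl (i, j)) k := by
  simp [mul_apply, Fintype.sum_prod_type, prodRuleT, ite_and]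

@[simp]
theorem prodRuleT_mul_apply_inl_inr : (T * M) (.inl i, .inr j) k = M (.inr (i, j)) k := by
  simp [mul_apply, Fintype.sum_prod_type, prodRuleT, ite_and]

@[simp]
theorem prodRuleT_mul_apply_inr_inl : (T * M) (.inr i, .inl j) k = M (.inr (i, j)) k := by
  simp [mul_apply, Fintype.sum_prod_type, prodRuleT, ite_and]

@[simp]
theorem prodRuleT_mul_apply_inr_inr : (T * M) (.inr i, .inr j) k = 0 := by
  simp [mul_apply, prodRuleT]

end prodRuleT_mul

theorem prolong_kronecker_mul_prodRuleT (δ : R → R)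
    (hδ : ∀ a b : R, δ (a * b) = δ a * b + a * δ b) (g : Matrix (Fin n) (Fin n) R)
    (h : Matrix (Fin m) (Fin m) R) :
    prolong δ g ⊗ₖ prolong δ h * T = T * prolong δ (g ⊗ₖ h) := by
  ext ⟨a, b⟩ (⟨i, j⟩ | ⟨i, j⟩) <;> rcases a with a | a <;> rcases b with b | b <;>
    simp [prolong, map_kronecker_of_leibniz δ hδ, add_comm]

end prodRuleT

theorem stmt_11_general {R : Type*} [CommRing R] {n m : ℕ}
    (δ : R → R)
    (hδ_leibniz : ∀ a b : R, δ (a * b) = δ a * b + a * δ b)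
    (g : Matrix (Fin n) (Fin n) R) (h : Matrix (Fin m) (Fin m) R)
    (Q : Matrix ((Fin n ⊕ Fin n) × (Fin m ⊕ Fin m)) ((Fin n ⊕ Fin n) × (Fin m ⊕ Fin m)) R)
    (hQ : Q = prolong δ g ⊗ₖ prolong δ h) :
    Q * (prodRuleT : Matrix _ _ R) = prodRuleT * prolong δ (g ⊗ₖ h) := by
  subst hQ
  exact prolong_kronecker_mul_prodRuleT δ hδ_leibniz g h

/-- for a derivation `δ` on a commutative ring `R` and invertible matrices
`g` (`n × n`) and `h` (`m × m`), the Kronecker product `Q = P(g) ⊗ P(h)` of the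
prolongations and the product-rule matrix `T` satisfy `Q · T = T · P(g ⊗ h)`. -/
theorem stmt_11 {R : Type*} [CommRing R] {n m : ℕ}
    (δ : R → R)
    (hδ_add : ∀ a b : R, δ (a + b) = δ a + δ b)
    (hδ_leibniz : ∀ a b : R, δ (a * b) = δ a * b + a * δ b)
    (g : Matrix (Fin n) (Fin n) R) (h : Matrix (Fin m) (Fin m) R)
    (hg : IsUnit g) (hh : IsUnit h)
    (Q : Matrix ((Fin n ⊕ Fin n) × (Fin m ⊕ Fin m)) ((Fin n ⊕ Fin n) × (Fin m ⊕ Fin m)) R)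
    (hQ : Q = prolong δ g ⊗ₖ prolong δ h) :
    Q * (prodRuleT : Matrix _ _ R) = prodRuleT * prolong δ (g ⊗ₖ h) :=
  stmt_11_general δ hδ_leibniz g h Q hQ
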